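/- arXiv:1111.0508 — 4 statements merged into one kernel-verified Lean document; each statement's English description precedes it below -/
import Mathlib

section
/- In the SPA model, for the vertex v_i born at time i and every time t ≥ i, the expectation of the shifted in-degree X(v_i,t) = deg⁻(v_i,t) + A_2/A_1 satisfies the recurrence E(X(v_i,t+1)) = (1 + pA_1/t)·E(X(v_i,t)); consequently, for all t ≥ i, E(deg⁻(v_i,t) + A_2/A_1) = (A_2/A_1)·∏_{j=i}^{t−1} (1 + pA_1/j). -/
noncomputable section

/-- The `m`-dimensional unit torus (unit hypercube with the torus metric). -/
abbrev Torus (m : ℕ) := Fin m → AddCircle (1 : ℝ)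

/-- The Spatial Preferred Attachment (SPA) model, presented as a probability space
carrying i.i.d. uniform random seeds `R`: the coordinates of the position of the vertex
born at time `t` (seeds indexed by `Sum.inl (t, j)`) and the link coin flips for the
potential edge from the vertex born at time `t` to the vertex born at time `u`
(seeds indexed by `Sum.inr (t, u)`), together with the edge relation `edge t u`
("the vertex born at time `t` links to the vertex born at time `u`"), which is
determined by the seeds via the defining rule `edge_iff` of the SPA model:
the new vertex `v_t` links to an existing vertex `v_u` (`1 ≤ u < t`) iff it falls in
the sphere of influence of `v_u` at time `t-1` (the ball around `v_u` of volume
`min ((A1 * deg⁻(v_u, t-1) + A2)/(t-1)) 1`, membership in which is expressed by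
`cm * dist ^ m ≤ volume of the sphere`, where `cm` is the constant such that a ball
of radius `r` has volume `cm * r ^ m`) and its coin flip succeeds (probability `p`). -/
structure SPAModel (m : ℕ) (p A1 A2 cm : ℝ) where
  Ω : Type
  [mΩ : MeasurableSpace Ω]
  P : MeasureTheory.Measure Ω
  probP : MeasureTheory.IsProbabilityMeasure P
  R : (ℕ × Fin m) ⊕ (ℕ × ℕ) → Ω → ℝ
  edge : ℕ → ℕ → Ω → Prop
  R_meas : ∀ i, Measurable (R i)
  R_unif : ∀ i, MeasureTheory.Measure.map (R i) P
    = MeasureTheory.volume.restrict (Set.Icc (0:ℝ) 1)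
  indep : ProbabilityTheory.iIndepFun R P
  edge_iff : ∀ t u : ℕ, ∀ ω,
    edge t u ω ↔
      1 ≤ u ∧ u < t ∧
      cm * (dist (fun j => ((R (Sum.inl (t, j)) ω : ℝ) : AddCircle (1:ℝ)))
                 (fun j => ((R (Sum.inl (u, j)) ω : ℝ) : AddCircle (1:ℝ)))) ^ m
        ≤ min ((A1 * ((Set.ncard {s | s ≤ t - 1 ∧ edge s u ω} : ℕ) : ℝ) + A2) / ((t : ℝ) - 1)) 1 ∧
      R (Sum.inr (t, u)) ω ≤ p

attribute [instance] SPAModel.mΩ SPAModel.probP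

namespace SPAModel

variable {m : ℕ} {p A1 A2 cm : ℝ}

/-- Position (in the torus) of the vertex born at time `t`. -/
def pos (M : SPAModel m p A1 A2 cm) (t : ℕ) (ω : M.Ω) : Torus m :=
  fun j => ((M.R (Sum.inl (t, j)) ω : ℝ) : AddCircle (1:ℝ))

/-- In-degree of the vertex born at time `u` in the graph `G_t`. -/
def deg (M : SPAModel m p A1 A2 cm) (u t : ℕ) (ω : M.Ω) : ℕ :=
  Set.ncard {s | s ≤ t ∧ M.edge s u ω}

/-- Volume of the sphere of influence of the vertex born at time `u` at time `t`. -/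
def volS (M : SPAModel m p A1 A2 cm) (u t : ℕ) (ω : M.Ω) : ℝ :=
  min ((A1 * (M.deg u t ω : ℝ) + A2) / (t : ℝ)) 1

/-- `cn u v t`: the number of common in-neighbours of vertices `u` and `v` at time `t`. -/
def cn (M : SPAModel m p A1 A2 cm) (u v t : ℕ) (ω : M.Ω) : ℕ :=
  Set.ncard {s | s ≤ t ∧ M.edge s u ω ∧ M.edge s v ω}

/-- The number of "long" edges (of length at least `r_α = (n^{-α}/cm)^{1/m}`) in `G_n`. -/
def longEdges (M : SPAModel m p A1 A2 cm) (n : ℕ) (α : ℝ) (ω : M.Ω) : ℕ :=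
  Set.ncard {e : ℕ × ℕ | e.1 ≤ n ∧ M.edge e.1 e.2 ω ∧
    (((n : ℝ) ^ (-α)) / cm) ^ (1 / (m : ℝ)) ≤ dist (M.pos e.1 ω) (M.pos e.2 ω)}

end SPAModel

/-!
The in-degree of `v_i` grows at step `t + 1` by the indicator of the edge `v_{t+1} → v_i`.
This edge is present iff the coin `R (inr (t+1, i))` is at most `p` and the new position
`pos (t+1)` lies in the sphere of influence of `v_i`, which is determined by the seeds drawn up
to time `t`. The coin, the new position and those older seeds are independent, and the new
position is uniform on the torus, so the edge has probability `p · E |S(v_i, t)|`. The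
normalisation of balls forces `cm = 2 ^ m` (the metric on `Torus m` is the sup metric, whose
ball of radius `1/2` has full measure), so the sphere of influence of volume `v` is a closed ball
of measure exactly `v`. As the cap is never reached, `|S(v_i, t)| = (A₁ deg + A₂) / t`, and
taking expectations gives `E deg(t+1) = E deg(t) + p (A₁ E deg(t) + A₂) / t`, which is
multiplicative in the shifted variable; iterate from `deg(v_i, i) = 0`.
-/

open MeasureTheory ProbabilityTheory Metric

theorem AddCircle.measurePreserving_mk_Icc {T : ℝ} [Fact (0 < T)] (t : ℝ) :
    MeasurePreserving ((↑) : ℝ → AddCircle T) (volume.restrict (Set.Icc t (t + T))) volume := by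
  rw [← Measure.restrict_congr_set Ioc_ae_eq_Icc]
  exact AddCircle.measurePreserving_mk T t

theorem ProbabilityTheory.IndepFun.measure_preimage_prodMk_eq_lintegral
    {Ω α β : Type*} [MeasurableSpace Ω] [MeasurableSpace α] [MeasurableSpace β]
    {μ : Measure Ω} [IsFiniteMeasure μ] {X : Ω → α} {Y : Ω → β} (hXY : IndepFun X Y μ)
    (hX : Measurable X) (hY : Measurable Y) {A : Set (α × β)} (hA : MeasurableSet A) :
    μ ((fun ω => (X ω, Y ω)) ⁻¹' A) = ∫⁻ ω, μ.map Y (Prod.mk (X ω) ⁻¹' A) ∂μ := by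
  rw [← Measure.map_apply (hX.prodMk hY) hA,
    hXY.map_prod_eq_prod_map_map hX.aemeasurable hY.aemeasurable, Measure.prod_apply hA,
    lintegral_map (measurable_measure_prodMk_left hA) hX]

namespace Torus

variable {m : ℕ}

theorem volume_closedBall (x : Torus m) {r : ℝ} (hr0 : 0 ≤ r) (hr1 : 2 * r ≤ 1) :
    volume (closedBall x r) = ENNReal.ofReal ((2 * r) ^ m) := by
  rw [closedBall_pi _ hr0, volume_pi, Measure.pi_pi]
  simp only [AddCircle.volume_closedBall, min_eq_right hr1, Finset.prod_const,
    Finset.card_univ, Fintype.card_fin]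
  rw [ENNReal.ofReal_pow (by linarith)]

theorem volume_ball_half (x : Torus m) : volume (ball x (1 / 2)) = 1 := by
  rw [ball_pi _ (by norm_num), volume_pi, Measure.pi_pi]
  simp [← measure_congr AddCircle.closedBall_ae_eq_ball, AddCircle.volume_closedBall]

theorem eq_two_pow_of_volume_ball {c : ℝ}
    (hc : ∀ x : Torus m, ∀ r : ℝ, 0 ≤ r → r ≤ 1 / 2 →
      volume (ball x r) = ENNReal.ofReal (c * r ^ m)) :
    c = 2 ^ m := by
  have h := hc 0 (1 / 2) (by norm_num) le_rfl
  rw [volume_ball_half, eq_comm, ENNReal.ofReal_eq_one] at h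
  rw [one_div, inv_pow, ← div_eq_mul_inv, div_eq_one_iff_eq (by positivity)] at h
  exact h

theorem volume_setOf_two_pow_mul_dist_pow_le (hm : m ≠ 0) (x : Torus m) {v : ℝ}
    (hv0 : 0 ≤ v) (hv1 : v ≤ 1) :
    volume {y : Torus m | 2 ^ m * dist y x ^ m ≤ v} = ENNReal.ofReal v := by
  set r := v ^ (1 / (m : ℝ)) / 2
  have hr0 : 0 ≤ r := by positivity
  have hpow : (2 * r) ^ m = v := by
    rw [mul_div_cancel₀ _ two_ne_zero, ← Real.rpow_natCast, ← Real.rpow_mul hv0,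
      one_div_mul_cancel (by exact_mod_cast hm), Real.rpow_one]
  have hset : {y : Torus m | 2 ^ m * dist y x ^ m ≤ v} = closedBall x r := by
    ext y
    rw [Set.mem_ofPred_eq, mem_closedBall, ← mul_pow, ← hpow,
      pow_le_pow_iff_left₀ (by positivity) (by positivity) hm]
    constructor <;> intro h <;> linarith
  have hr1 : 2 * r ≤ 1 := by
    rw [mul_div_cancel₀ _ two_ne_zero]
    exact Real.rpow_le_one hv0 hv1 (by positivity)
  rw [hset, volume_closedBall x hr0 hr1, hpow]

end Torus

namespace SPAModel

variable {m : ℕ} {p A1 A2 cm : ℝ} (M : SPAModel m p A1 A2 cm)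

def seedTime : (ℕ × Fin m) ⊕ (ℕ × ℕ) → ℕ := Sum.elim Prod.fst Prod.fst

abbrev seedSigma (S : Set ((ℕ × Fin m) ⊕ (ℕ × ℕ))) : MeasurableSpace M.Ω :=
  ⨆ k ∈ S, MeasurableSpace.comap (M.R k) inferInstance

variable {M}

theorem seedSigma_le (S : Set ((ℕ × Fin m) ⊕ (ℕ × ℕ))) : M.seedSigma S ≤ M.mΩ :=
  iSup₂_le fun k _ => (M.R_meas k).comap_le

theorem seedSigma_mono {S T : Set ((ℕ × Fin m) ⊕ (ℕ × ℕ))} (h : S ⊆ T) :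
    M.seedSigma S ≤ M.seedSigma T :=
  biSup_mono h

theorem measurable_R_seedSigma {S : Set ((ℕ × Fin m) ⊕ (ℕ × ℕ))} {k} (hk : k ∈ S) :
    Measurable[M.seedSigma S] (M.R k) :=
  Measurable.of_comap_le
    (le_iSup₂ (f := fun k (_ : k ∈ S) => MeasurableSpace.comap (M.R k) _) k hk)

theorem indepFun_of_measurable_seedSigma_compl {β γ : Type*} [MeasurableSpace β]
    [MeasurableSpace γ] {S : Set ((ℕ × Fin m) ⊕ (ℕ × ℕ))} {f : M.Ω → β} {g : M.Ω → γ}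
    (hf : Measurable[M.seedSigma S] f) (hg : Measurable[M.seedSigma Sᶜ] g) :
    IndepFun f g M.P := by
  have h := indep_iSup_of_disjoint (fun k => (M.R_meas k).comap_le)
    ((iIndepFun_iff_iIndep _ _ _).mp M.indep) (disjoint_compl_right (a := S))
  exact (IndepFun_iff_Indep f g M.P).mpr
    (indep_of_indep_of_le_left (indep_of_indep_of_le_right h hg.comap_le) hf.comap_le)

theorem measurable_pos {m' : MeasurableSpace M.Ω} {u : ℕ}
    (h : ∀ j, Measurable[m'] (M.R (.inl (u, j)))) : Measurable[m'] (M.pos u) :=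
  measurable_pi_iff.mpr fun j => AddCircle.measurable_mk'.comp (h j)

theorem deg_eq_sum_indicator (u N : ℕ) (ω : M.Ω) :
    (M.deg u N ω : ℝ) = ∑ s ∈ Finset.range (N + 1), {ω | M.edge s u ω}.indicator 1 ω := by
  classical
  have : {s | s ≤ N ∧ M.edge s u ω} = ↑((Finset.range (N + 1)).filter (M.edge · u ω)) := by
    ext s
    simp
  rw [deg, this, Set.ncard_coe_finset, Finset.natCast_card_filter]
  simp [Set.indicator_apply]

theorem deg_succ (u t : ℕ) (ω : M.Ω) :
    (M.deg u (t + 1) ω : ℝ) = M.deg u t ω + {ω | M.edge (t + 1) u ω}.indicator 1 ω := by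
  rw [deg_eq_sum_indicator, deg_eq_sum_indicator, Finset.sum_range_succ]

theorem deg_self (u : ℕ) (ω : M.Ω) : M.deg u u ω = 0 := by
  have : {s | s ≤ u ∧ M.edge s u ω} = ∅ := Set.eq_empty_of_forall_notMem fun s ⟨hs, he⟩ => by
    have := ((M.edge_iff s u ω).mp he).2.1
    omega
  rw [deg, this, Set.ncard_empty]

theorem deg_le (u N : ℕ) (ω : M.Ω) : M.deg u N ω ≤ N + 1 := by
  calc M.deg u N ω ≤ (Set.Iic N).ncard :=
        Set.ncard_le_ncard (fun _ hs => hs.1) (Set.finite_Iic N)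
    _ = N + 1 := Set.ncard_Iic_nat N

theorem edge_succ_iff {u t : ℕ} (hu : 1 ≤ u) (hut : u ≤ t) (ω : M.Ω) :
    M.edge (t + 1) u ω ↔
      cm * dist (M.pos (t + 1) ω) (M.pos u ω) ^ m ≤ M.volS u t ω ∧
        M.R (.inr (t + 1, u)) ω ≤ p := by
  rw [M.edge_iff, Nat.add_sub_cancel, Nat.cast_succ, add_sub_cancel_right]
  exact ⟨fun h => h.2.2, fun h => ⟨hu, by omega, h⟩⟩

theorem measurable_deg_of_measurableSet_edge {m' : MeasurableSpace M.Ω} {u N : ℕ}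
    (h : ∀ s ≤ N, MeasurableSet[m'] {ω | M.edge s u ω}) :
    Measurable[m'] (fun ω => (M.deg u N ω : ℝ)) := by
  simp_rw [deg_eq_sum_indicator]
  exact Finset.measurable_sum _ fun s hs =>
    measurable_const.indicator (h s (Nat.lt_succ_iff.mp (Finset.mem_range.mp hs)))

theorem measurable_volS_of_measurable_deg {m' : MeasurableSpace M.Ω} {u t : ℕ}
    (h : Measurable[m'] fun ω => (M.deg u t ω : ℝ)) : Measurable[m'] (M.volS u t) :=
  (((h.const_mul A1).add_const A2).div_const _).min measurable_const

theorem measurableSet_edge_of_measurable_R {m' : MeasurableSpace M.Ω} {T : ℕ}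
    (hR : ∀ k, seedTime k ≤ T → Measurable[m'] (M.R k)) {s : ℕ} (hs : s ≤ T) (u : ℕ) :
    MeasurableSet[m'] {ω | M.edge s u ω} := by
  induction s using Nat.strong_induction_on with
  | _ s ih =>
  by_cases hus : 1 ≤ u ∧ u < s
  · obtain ⟨t, rfl⟩ : ∃ t, s = t + 1 := ⟨s - 1, by omega⟩
    have hdeg := measurable_deg_of_measurableSet_edge (M := M) (N := t) (u := u)
      fun s' hs' => ih s' (by omega) (by omega)
    have hvolS := measurable_volS_of_measurable_deg hdeg
    have hdist := (measurable_pos (M := M) (u := t + 1) fun _ => hR _ hs).dist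
      (measurable_pos (M := M) (u := u) fun _ => hR _ (show u ≤ T by omega))
    simp_rw [edge_succ_iff hus.1 (Nat.lt_succ_iff.mp hus.2), Set.ofPred_and]
    exact (measurableSet_le ((hdist.pow_const m).const_mul cm) hvolS).inter
      (hR (.inr (t + 1, u)) hs measurableSet_Iic)
  · convert MeasurableSet.empty
    exact Set.eq_empty_of_forall_notMem fun ω he =>
      hus ⟨((M.edge_iff s u ω).mp he).1, ((M.edge_iff s u ω).mp he).2.1⟩

theorem measurableSet_edge (s u : ℕ) : MeasurableSet {ω | M.edge s u ω} :=
  measurableSet_edge_of_measurable_R (T := s) (fun k _ => M.R_meas k) le_rfl u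

theorem measurable_deg (u N : ℕ) : Measurable fun ω => (M.deg u N ω : ℝ) :=
  measurable_deg_of_measurableSet_edge fun s _ => measurableSet_edge s u

theorem measurable_deg_seedSigma {u N T : ℕ} (hN : N ≤ T) :
    Measurable[M.seedSigma {k | seedTime k ≤ T}] fun ω => (M.deg u N ω : ℝ) :=
  measurable_deg_of_measurableSet_edge fun _ hs =>
    measurableSet_edge_of_measurable_R (fun _ hk => measurable_R_seedSigma hk) (hs.trans hN) u

theorem integrable_deg (u N : ℕ) : Integrable (fun ω => (M.deg u N ω : ℝ)) M.P :=
  .of_bound (measurable_deg u N).aestronglyMeasurable (N + 1) <| .of_forall fun ω => by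
    rw [Real.norm_natCast]
    exact_mod_cast deg_le u N ω

theorem volS_nonneg (hA1 : 0 ≤ A1) (hA2 : 0 ≤ A2) (u t : ℕ) (ω : M.Ω) : 0 ≤ M.volS u t ω :=
  le_min (by positivity) zero_le_one

theorem map_pos (u : ℕ) : M.P.map (M.pos u) = volume := by
  have hcoe := AddCircle.measurePreserving_mk_Icc (T := 1) 0
  rw [zero_add] at hcoe
  have hcoord (j : Fin m) :
      M.P.map ((↑) ∘ M.R (.inl (u, j)) : M.Ω → AddCircle (1 : ℝ)) = volume := by
    rw [← Measure.map_map AddCircle.measurable_mk' (M.R_meas _), M.R_unif, hcoe.map_eq]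
  have hindep :
      iIndepFun (fun j => ((↑) ∘ M.R (.inl (u, j)) : M.Ω → AddCircle (1 : ℝ))) M.P :=
    (M.indep.precomp (g := fun j => .inl (u, j)) fun _ _ h => by simpa using h).comp
      (fun _ => ((↑) : ℝ → AddCircle (1 : ℝ))) fun _ => AddCircle.measurable_mk'
  change M.P.map (fun ω j => ((↑) ∘ M.R (.inl (u, j)) : M.Ω → AddCircle (1 : ℝ)) ω) = volume
  rw [(iIndepFun_iff_map_fun_eq_pi_map
    fun j => (AddCircle.measurable_mk'.comp (M.R_meas _)).aemeasurable).mp hindep]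
  simp_rw [hcoord]
  exact volume_pi.symm

theorem measureReal_R_le (k : (ℕ × Fin m) ⊕ (ℕ × ℕ)) {c : ℝ} (hc0 : 0 ≤ c) (hc1 : c ≤ 1) :
    M.P.real (M.R k ⁻¹' Set.Iic c) = c := by
  have : Set.Iic c ∩ Set.Icc 0 1 = Set.Icc 0 c := by
    ext x
    simp only [Set.mem_inter_iff, Set.mem_Iic, Set.mem_Icc]
    exact ⟨fun h => ⟨h.2.1, h.1⟩, fun h => ⟨h.2, h.1, h.2.trans hc1⟩⟩
  rw [measureReal_def, ← Measure.map_apply (M.R_meas k) measurableSet_Iic,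
    M.R_unif, Measure.restrict_apply measurableSet_Iic, this, Real.volume_Icc, sub_zero,
    ENNReal.toReal_ofReal hc0]

theorem measureReal_edge_succ (hm : m ≠ 0)
    (hcm : ∀ x : Torus m, ∀ r : ℝ, 0 ≤ r → r ≤ 1 / 2 →
      volume (ball x r) = ENNReal.ofReal (cm * r ^ m))
    (hp0 : 0 ≤ p) (hp1 : p ≤ 1) (hA1 : 0 ≤ A1) (hA2 : 0 ≤ A2) {i t : ℕ} (hi : 1 ≤ i)
    (hit : i ≤ t) :
    M.P.real {ω | M.edge (t + 1) i ω} = p * ∫ ω, M.volS i t ω ∂M.P := by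
  obtain rfl := Torus.eq_two_pow_of_volume_ball hcm
  set c : (ℕ × Fin m) ⊕ (ℕ × ℕ) := .inr (t + 1, i)
  set Z : M.Ω → ℝ × Torus m := fun ω => (M.volS i t ω, M.pos i ω)
  set A : Set ((ℝ × Torus m) × Torus m) := {q | 2 ^ m * dist q.2 q.1.2 ^ m ≤ q.1.1}
  have hZ : Measurable[M.seedSigma {k | seedTime k ≤ t}] Z :=
    (measurable_volS_of_measurable_deg (measurable_deg_seedSigma le_rfl)).prodMk
      (measurable_pos fun _ => measurable_R_seedSigma hit)
  have hY : Measurable[M.seedSigma {k | seedTime k ≤ t}ᶜ] (M.pos (t + 1)) :=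
    measurable_pos fun _ => measurable_R_seedSigma (by simp [seedTime])
  have hA : MeasurableSet A :=
    measurableSet_le
      (((measurable_snd.dist (measurable_snd.comp measurable_fst)).pow_const m).const_mul _)
      (measurable_fst.comp measurable_fst)
  have hZY : Measurable[M.seedSigma {c}ᶜ] fun ω => (Z ω, M.pos (t + 1) ω) := by
    refine (hZ.mono (seedSigma_mono ?_) le_rfl).prodMk
      (measurable_pos fun _ => measurable_R_seedSigma (by simp [c]))
    intro k hk
    simp only [Set.mem_compl_iff, Set.mem_singleton_iff]
    rintro rfl
    simp [seedTime, c] at hk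
  have hedge : {ω | M.edge (t + 1) i ω} =
      M.R c ⁻¹' Set.Iic p ∩ (fun ω => (Z ω, M.pos (t + 1) ω)) ⁻¹' A := by
    ext ω
    simp [edge_succ_iff hi hit, A, Z, c, and_comm]
  have hgeom :
      M.P.real ((fun ω => (Z ω, M.pos (t + 1) ω)) ⁻¹' A) = ∫ ω, M.volS i t ω ∂M.P := by
    rw [measureReal_def,
      (indepFun_of_measurable_seedSigma_compl hZ hY).measure_preimage_prodMk_eq_lintegral
        (hZ.mono (seedSigma_le _) le_rfl) (hY.mono (seedSigma_le _) le_rfl) hA, map_pos,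
      integral_eq_lintegral_of_nonneg_ae (.of_forall (volS_nonneg hA1 hA2 i t))
        (measurable_volS_of_measurable_deg (measurable_deg i t)).aestronglyMeasurable]
    congr 1
    exact lintegral_congr fun ω => Torus.volume_setOf_two_pow_mul_dist_pow_le hm _
      (volS_nonneg hA1 hA2 i t ω) (min_le_right _ _)
  rw [hedge, measureReal_def, (indepFun_of_measurable_seedSigma_compl
      (measurable_R_seedSigma (Set.mem_singleton c)) hZY).measure_inter_preimage_eq_mul _ _
      measurableSet_Iic hA, ENNReal.toReal_mul, ← measureReal_def, ← measureReal_def,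
    measureReal_R_le c hp0 hp1, hgeom]

theorem integral_deg_succ (u t : ℕ) :
    ∫ ω, (M.deg u (t + 1) ω : ℝ) ∂M.P =
      ∫ ω, (M.deg u t ω : ℝ) ∂M.P + M.P.real {ω | M.edge (t + 1) u ω} := by
  have hedge : Integrable ({ω | M.edge (t + 1) u ω}.indicator (1 : M.Ω → ℝ)) M.P :=
    (integrable_const 1).indicator (measurableSet_edge _ _)
  simp_rw [deg_succ]
  rw [integral_add (integrable_deg u t) hedge, integral_indicator_one (measurableSet_edge _ _)]

end SPAModel

open MeasureTheory ProbabilityTheory Real Filter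
theorem spa_expected_in_degree_recurrence_general
    (m : ℕ) (hm : 1 ≤ m) (p A1 A2 cm : ℝ)
    (hp0 : 0 < p) (hp1 : p ≤ 1) (hA1 : 0 < A1) (hA2 : 0 < A2)
    (hcm : ∀ x : Torus m, ∀ r : ℝ, 0 ≤ r → r ≤ 1/2 →
      volume (Metric.ball x r) = ENNReal.ofReal (cm * r ^ m))
    (M : SPAModel m p A1 A2 cm)
    (i : ℕ) (hi : 1 ≤ i)
    (hcap : ∀ t : ℕ, i ≤ t → ∀ ω : M.Ω, (A1 * (M.deg i t ω : ℝ) + A2) / (t : ℝ) ≤ 1) :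
    (∀ t : ℕ, i ≤ t →
      (∫ ω, ((M.deg i (t + 1) ω : ℝ) + A2 / A1) ∂M.P)
        = (1 + p * A1 / (t : ℝ)) * ∫ ω, ((M.deg i t ω : ℝ) + A2 / A1) ∂M.P) ∧
    (∀ t : ℕ, i ≤ t →
      (∫ ω, ((M.deg i t ω : ℝ) + A2 / A1) ∂M.P)
        = (A2 / A1) * ∏ j ∈ Finset.Ico i t, (1 + p * A1 / (j : ℝ))) := by
  have hshift (t : ℕ) : ∫ ω, ((M.deg i t ω : ℝ) + A2 / A1) ∂M.P
      = ∫ ω, (M.deg i t ω : ℝ) ∂M.P + A2 / A1 := by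
    rw [integral_add (SPAModel.integrable_deg i t) (integrable_const _), integral_const,
      probReal_univ, one_smul]
  have hstep (t : ℕ) (ht : i ≤ t) : ∫ ω, ((M.deg i (t + 1) ω : ℝ) + A2 / A1) ∂M.P
      = (1 + p * A1 / (t : ℝ)) * ∫ ω, ((M.deg i t ω : ℝ) + A2 / A1) ∂M.P := by
    have ht0 : (t : ℝ) ≠ 0 := by exact_mod_cast (by omega : t ≠ 0)
    have hvolS : ∫ ω, M.volS i t ω ∂M.P = (A1 * ∫ ω, (M.deg i t ω : ℝ) ∂M.P + A2) / t := by
      have hcapped : M.volS i t = fun ω => (A1 * M.deg i t ω + A2) / t :=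
        funext fun ω => min_eq_left (hcap t ht ω)
      rw [hcapped, integral_div,
        integral_add ((SPAModel.integrable_deg i t).const_mul A1) (integrable_const _),
        integral_const_mul, integral_const, probReal_univ, one_smul]
    rw [hshift, hshift, SPAModel.integral_deg_succ,
      SPAModel.measureReal_edge_succ (by omega) hcm hp0.le hp1 hA1.le hA2.le hi ht, hvolS]
    field_simp
    ring
  refine ⟨hstep, fun t ht => ?_⟩
  induction t, ht using Nat.le_induction with
  | base => simp [SPAModel.deg_self]
  | succ t ht ih => rw [hstep t ht, ih, Finset.prod_Ico_succ_top ht]; ring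

/-- In the SPA model, for the vertex v_i born at time i and every t ≥ i,
the expectation of the shifted in-degree X(v_i,t) = deg⁻(v_i,t) + A₂/A₁ satisfies
E(X(v_i,t+1)) = (1 + pA₁/t)·E(X(v_i,t)); consequently, for all t ≥ i,
E(deg⁻(v_i,t) + A₂/A₁) = (A₂/A₁)·∏_{j=i}^{t−1} (1 + pA₁/j).
(The probability p·|S(v_i,t)| = p·(A₁·deg⁻(v_i,t)+A₂)/t of receiving a new in-neighbour
is assumed to be at most 1; i.e. the sphere of influence is not capped at the whole
space, so that (A₁·deg⁻(v_i,t)+A₂)/t ≤ 1, whence also p·(A₁·deg⁻(v_i,t)+A₂)/t ≤ 1.) -/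
theorem spa_expected_in_degree_recurrence
    (m : ℕ) (hm : 1 ≤ m) (p A1 A2 cm : ℝ)
    (hp0 : 0 < p) (hp1 : p ≤ 1) (hA1 : 0 < A1) (hA2 : 0 < A2) (hpA1 : p * A1 < 1)
    (hcm : ∀ x : Torus m, ∀ r : ℝ, 0 ≤ r → r ≤ 1/2 →
      volume (Metric.ball x r) = ENNReal.ofReal (cm * r ^ m))
    (M : SPAModel m p A1 A2 cm)
    (i : ℕ) (hi : 1 ≤ i)
    (hcap : ∀ t : ℕ, i ≤ t → ∀ ω : M.Ω, (A1 * (M.deg i t ω : ℝ) + A2) / (t : ℝ) ≤ 1) :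
    (∀ t : ℕ, i ≤ t →
      (∫ ω, ((M.deg i (t + 1) ω : ℝ) + A2 / A1) ∂M.P)
        = (1 + p * A1 / (t : ℝ)) * ∫ ω, ((M.deg i t ω : ℝ) + A2 / A1) ∂M.P) ∧
    (∀ t : ℕ, i ≤ t →
      (∫ ω, ((M.deg i t ω : ℝ) + A2 / A1) ∂M.P)
        = (A2 / A1) * ∏ j ∈ Finset.Ico i t, (1 + p * A1 / (j : ℝ))) :=
  spa_expected_in_degree_recurrence_general m hm p A1 A2 cm hp0 hp1 hA1 hA2 hcm M i hi hcap
end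
end

section
/- Let p ∈ (0,1] and A_1, A_2 > 0 be reals. For every integer k ≥ 0, define c_k = p^k/(1 + k·pA_1 + pA_2) · ∏_{j=0}^{k−1} (j·A_1 + A_2)/(1 + j·pA_1 + pA_2) (so c_0 = 1/(1+pA_2)). Then c_k = (1/(pA_1)) · [Γ(k + A_2/A_1)/Γ(A_2/A_1)] / [Γ(k + 1 + A_2/A_1 + 1/(pA_1))/Γ(A_2/A_1 + 1/(pA_1))], where Γ is the real Gamma function. -/
/-! With `a = A₂/A₁` and `b = a + 1/(pA₁)`, the `j`-th factor of the product is
`(a + j) / (p (b + j))` and the prefactor is `p^k / (pA₁ (b + k))`, so `c_k` is `1/(pA₁)` times a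
ratio of rising products `∏_{j<k} (a + j) / ∏_{j≤k} (b + j)`; iterating `Γ(x + 1) = x Γ(x)`
turns each rising product into a ratio of Gamma values. -/

open Finset

namespace Real

theorem Gamma_add_nat_div_Gamma_eq_prod {x : ℝ} (hx : ∀ m : ℕ, x ≠ -m) (n : ℕ) :
    Gamma (x + n) / Gamma x = ∏ j ∈ range n, (x + j) := by
  induction n with
  | zero => simp [div_self (Gamma_ne_zero hx)]
  | succ n ih =>
    have hxn : x + n ≠ 0 := fun h => hx n (by linarith)
    rw [prod_range_succ, ← ih, Nat.cast_succ, ← add_assoc, Gamma_add_one hxn]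
    ring

theorem ne_neg_natCast_of_pos {x : ℝ} (hx : 0 < x) (m : ℕ) : x ≠ -m := by
  have : (0 : ℝ) ≤ m := m.cast_nonneg
  linarith

end Real

theorem spa_ck_gamma_formula_general (p A1 A2 : ℝ) (hp0 : 0 < p)
    (hA1 : 0 < A1) (hA2 : 0 < A2) (k : ℕ) :
    p ^ k / (1 + (k : ℝ) * (p * A1) + p * A2) *
        ∏ j ∈ Finset.range k, (((j : ℝ) * A1 + A2) / (1 + (j : ℝ) * (p * A1) + p * A2))
      = (1 / (p * A1)) *
          ((Real.Gamma ((k : ℝ) + A2 / A1) / Real.Gamma (A2 / A1)) /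
            (Real.Gamma ((k : ℝ) + 1 + A2 / A1 + 1 / (p * A1)) /
              Real.Gamma (A2 / A1 + 1 / (p * A1)))) := by
  set a := A2 / A1
  set b := A2 / A1 + 1 / (p * A1)
  have ha : 0 < a := div_pos hA2 hA1
  have hb : 0 < b := by positivity
  have hfactor (j : ℕ) : ((j : ℝ) * A1 + A2) / (1 + j * (p * A1) + p * A2)
      = (a + j) / (p * (b + j)) := by
    simp only [a, b]
    field_simp
    ring
  have hlast : 1 + (k : ℝ) * (p * A1) + p * A2 = p * A1 * (b + k) := by
    simp only [b]
    field_simp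
    ring
  have hGa : Real.Gamma ((k : ℝ) + a) / Real.Gamma a = ∏ j ∈ range k, (a + j) := by
    rw [add_comm, Real.Gamma_add_nat_div_Gamma_eq_prod (Real.ne_neg_natCast_of_pos ha)]
  have hGb : Real.Gamma ((k : ℝ) + 1 + b) / Real.Gamma b = ∏ j ∈ range (k + 1), (b + j) := by
    rw [← Real.Gamma_add_nat_div_Gamma_eq_prod (Real.ne_neg_natCast_of_pos hb)]
    push_cast
    ring_nf
  rw [show (k : ℝ) + 1 + a + 1 / (p * A1) = (k : ℝ) + 1 + b by ring, hGa, hGb,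
    prod_congr rfl fun j _ => hfactor j, prod_div_distrib, prod_mul_distrib, prod_const,
    card_range, prod_range_succ, hlast]
  field_simp

/-- For p ∈ (0,1], A₁, A₂ > 0 and k ≥ 0, the limiting in-degree
distribution coefficient c_k = p^k/(1 + k·pA₁ + pA₂)·∏_{j=0}^{k−1}(jA₁+A₂)/(1+j·pA₁+pA₂)
satisfies c_k = (1/(pA₁))·[Γ(k + A₂/A₁)/Γ(A₂/A₁)]/[Γ(k+1+A₂/A₁+1/(pA₁))/Γ(A₂/A₁+1/(pA₁))]. -/
theorem spa_ck_gamma_formula (p A1 A2 : ℝ) (hp0 : 0 < p) (hp1 : p ≤ 1)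
    (hA1 : 0 < A1) (hA2 : 0 < A2) (k : ℕ) :
    p ^ k / (1 + (k : ℝ) * (p * A1) + p * A2) *
        ∏ j ∈ Finset.range k, (((j : ℝ) * A1 + A2) / (1 + (j : ℝ) * (p * A1) + p * A2))
      = (1 / (p * A1)) *
          ((Real.Gamma ((k : ℝ) + A2 / A1) / Real.Gamma (A2 / A1)) /
            (Real.Gamma ((k : ℝ) + 1 + A2 / A1 + 1 / (p * A1)) /
              Real.Gamma (A2 / A1 + 1 / (p * A1)))) :=
  spa_ck_gamma_formula_general p A1 A2 hp0 hA1 hA2 k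
end

section
/- Let p ∈ (0,1] and A_1, A_2 > 0 be reals. With c_k = p^k/(1 + k·pA_1 + pA_2) · ∏_{j=0}^{k−1} (j·A_1 + A_2)/(1 + j·pA_1 + pA_2), one has lim_{k→∞} c_k · k^{1+1/(pA_1)} = (1/(pA_1)) · Γ(A_2/A_1 + 1/(pA_1)) / Γ(A_2/A_1); that is, c_k = (1+o(1)) · c · k^{−1−1/(pA_1)} as k → ∞, where c = (1/(pA_1)) · Γ(A_2/A_1 + 1/(pA_1)) / Γ(A_2/A_1). -/
open Filter

/-!
Writing `a = A₂/A₁` and `b = a + 1/(pA₁)`, each factor of the product is `p⁻¹ (a + j)/(b + j)`,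
so the powers of `p` cancel and `c_k k^{1 + 1/(pA₁)} = (pA₁)⁻¹ · k/(k + b) · k^{b-a} ∏_{j<k} (a+j)/(b+j)`.
By Euler's limit formula `Γ(s) = lim k^s k! / ∏_{j ≤ k} (s + j)`, the last factor tends to `Γ(b)/Γ(a)`.
-/

open Finset Real Topology

namespace Real

theorem GammaSeq_div_GammaSeq {a : ℝ} (ha : ∀ m : ℕ, a ≠ -m) (b : ℝ) {k : ℕ} (hk : k ≠ 0) :
    GammaSeq b k / GammaSeq a k =
      (k : ℝ) ^ (b - a) * ∏ j ∈ range (k + 1), (a + j) / (b + j) := by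
  have hk0 : (0 : ℝ) < k := by positivity
  have hPa : ∏ j ∈ range (k + 1), (a + j) ≠ 0 :=
    prod_ne_zero_iff.2 fun j _ => by simpa [add_eq_zero_iff_eq_neg] using ha j
  rw [GammaSeq, GammaSeq, prod_div_distrib, rpow_sub hk0]
  have : (0 : ℝ) < k ^ a := rpow_pos_of_pos hk0 a
  field_simp

theorem tendsto_rpow_mul_prod_div_Gamma {a : ℝ} (ha : ∀ m : ℕ, a ≠ -m) (b : ℝ) :
    Tendsto (fun k : ℕ => (k : ℝ) ^ (b - a) * ∏ j ∈ range k, (a + j) / (b + j)) atTop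
      (𝓝 (Gamma b / Gamma a)) := by
  -- the correction factor is `(k + b)/(k + a)`, removing the term `j = k` of Euler's product
  have hratio : Tendsto
      (fun k : ℕ => GammaSeq b k / GammaSeq a k * ((k / (k + a)) / (k / (k + b)))) atTop
      (𝓝 (Gamma b / Gamma a * (1 / 1))) :=
    ((GammaSeq_tendsto_Gamma b).div (GammaSeq_tendsto_Gamma a) (Gamma_ne_zero ha)).mul
      ((tendsto_natCast_div_add_atTop a).div (tendsto_natCast_div_add_atTop b) one_ne_zero)
  rw [div_one, mul_one] at hratio
  refine hratio.congr' ?_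
  filter_upwards [eventually_ne_atTop 0, tendsto_natCast_atTop_atTop.eventually_gt_atTop (-b)]
    with k hk hbk
  have hbk : b + k ≠ 0 := by linarith
  have hak : a + k ≠ 0 := fun h => ha k (by linarith)
  rw [GammaSeq_div_GammaSeq ha b hk, prod_range_succ, add_comm (k : ℝ) a, add_comm (k : ℝ) b]
  field_simp

end Real

/-- The coefficient `c_k` of the limiting in-degree distribution of the SPA model. -/
noncomputable def spaCoeff (p A1 A2 : ℝ) (k : ℕ) : ℝ :=
  p ^ k / (1 + (k : ℝ) * (p * A1) + p * A2) *
    ∏ j ∈ range k, (((j : ℝ) * A1 + A2) / (1 + (j : ℝ) * (p * A1) + p * A2))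

section spaCoeff

variable {p A1 : ℝ} (A2 : ℝ)

theorem spa_denom_eq (hp : p ≠ 0) (hA1 : A1 ≠ 0) (x : ℝ) :
    1 + x * (p * A1) + p * A2 = p * A1 * (A2 / A1 + 1 / (p * A1) + x) := by
  field_simp
  ring

theorem spaCoeff_eq (hp : p ≠ 0) (hA1 : A1 ≠ 0) (k : ℕ) :
    spaCoeff p A1 A2 k = 1 / (p * A1) / (A2 / A1 + 1 / (p * A1) + k) *
      ∏ j ∈ range k, (A2 / A1 + j) / (A2 / A1 + 1 / (p * A1) + j) := by
  have hfactor (j : ℕ) : ((j : ℝ) * A1 + A2) / (1 + (j : ℝ) * (p * A1) + p * A2) =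
      p⁻¹ * ((A2 / A1 + j) / (A2 / A1 + 1 / (p * A1) + j)) := by
    rw [spa_denom_eq A2 hp hA1]
    field_simp
    ring
  rw [spaCoeff, prod_congr rfl fun j _ => hfactor j, prod_mul_distrib, prod_const, card_range,
    inv_pow, spa_denom_eq A2 hp hA1]
  field_simp

theorem spaCoeff_mul_rpow_eq (hp : p ≠ 0) (hA1 : A1 ≠ 0) {k : ℕ} (hk : k ≠ 0) :
    spaCoeff p A1 A2 k * (k : ℝ) ^ (1 + 1 / (p * A1)) =
      1 / (p * A1) * (k / (k + (A2 / A1 + 1 / (p * A1)))) *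
        ((k : ℝ) ^ (1 / (p * A1)) *
          ∏ j ∈ range k, (A2 / A1 + j) / (A2 / A1 + 1 / (p * A1) + j)) := by
  rw [spaCoeff_eq A2 hp hA1, rpow_add (by positivity), rpow_one]
  field_simp
  ring

end spaCoeff

theorem spa_ck_power_law_asymptotics_general (p A1 A2 : ℝ) (hp0 : 0 < p)
    (hA1 : 0 < A1) (hA2 : 0 < A2) :
    Tendsto
      (fun k : ℕ =>
        (p ^ k / (1 + (k : ℝ) * (p * A1) + p * A2) *
            ∏ j ∈ Finset.range k, (((j : ℝ) * A1 + A2) / (1 + (j : ℝ) * (p * A1) + p * A2)))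
          * (k : ℝ) ^ (1 + 1 / (p * A1)))
      atTop
      (nhds ((1 / (p * A1)) * (Real.Gamma (A2 / A1 + 1 / (p * A1)) / Real.Gamma (A2 / A1)))) := by
  have ha : ∀ m : ℕ, A2 / A1 ≠ -m := fun m =>
    ((neg_nonpos.2 m.cast_nonneg).trans_lt (div_pos hA2 hA1)).ne'
  have hlim :=
    ((tendsto_natCast_div_add_atTop (A2 / A1 + 1 / (p * A1))).const_mul (1 / (p * A1))).mul
      (tendsto_rpow_mul_prod_div_Gamma ha (A2 / A1 + 1 / (p * A1)))
  rw [mul_one, add_sub_cancel_left] at hlim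
  refine hlim.congr' ((eventually_ne_atTop 0).mono fun k hk => ?_)
  exact (spaCoeff_mul_rpow_eq A2 hp0.ne' hA1.ne' hk).symm

/-- For p ∈ (0,1], A₁, A₂ > 0, the coefficients
c_k = p^k/(1 + k·pA₁ + pA₂)·∏_{j=0}^{k−1}(jA₁+A₂)/(1+j·pA₁+pA₂) satisfy
lim_{k→∞} c_k·k^{1+1/(pA₁)} = (1/(pA₁))·Γ(A₂/A₁ + 1/(pA₁))/Γ(A₂/A₁). -/
theorem spa_ck_power_law_asymptotics (p A1 A2 : ℝ) (hp0 : 0 < p) (hp1 : p ≤ 1)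
    (hA1 : 0 < A1) (hA2 : 0 < A2) :
    Tendsto
      (fun k : ℕ =>
        (p ^ k / (1 + (k : ℝ) * (p * A1) + p * A2) *
            ∏ j ∈ Finset.range k, (((j : ℝ) * A1 + A2) / (1 + (j : ℝ) * (p * A1) + p * A2)))
          * (k : ℝ) ^ (1 + 1 / (p * A1)))
      atTop
      (nhds ((1 / (p * A1)) * (Real.Gamma (A2 / A1 + 1 / (p * A1)) / Real.Gamma (A2 / A1)))) :=
  spa_ck_power_law_asymptotics_general p A1 A2 hp0 hA1 hA2
end

section
/- Fix reals p ∈ (0,1] and A_1 > 0 with pA_1 < 1, a constant c > 0, and α ∈ (0,1). For n a positive integer, set k_max(n) = n^{1−α}/A_1. Then, as n → ∞, ∑_{k ∈ ℕ, k ≥ k_max(n)} c·k^{−1−1/(pA_1)}·n·(k − p·n^{1−α}) = (1+o(1)) · c · (p·A_1^{1/(pA_1)}/(1−pA_1)) · n^{2−1/(pA_1)+α(1−pA_1)/(pA_1)} · (1 − pA_1·(1−pA_1)). -/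
/-!
Put s = 1/(pA₁) > 1 and K = n^{1-α}/A₁, so that p·n^{1-α} = pA₁·K and the summand is
c·n·(k^{-s} - pA₁K·k^{-s-1}). By the integral test, x^{σ-1}·∑_{k ≥ x} k^{-σ} → 1/(σ-1) for
every σ > 1, hence K^{s-1}·∑_{k ≥ K} k^{-1-s}(k - pA₁K) → 1/(s-1) - pA₁/s as K → ∞. The
claimed main term is exactly c·n·K^{1-s}·(1/(s-1) - pA₁/s), and 1/(s-1) - pA₁/s > 0.
-/

open Filter Real Topology Set

theorem tsum_subtype_le_natCast {α : Type*} [AddCommMonoid α] [TopologicalSpace α]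
    (f : ℕ → α) (x : ℝ) :
    ∑' k : {k : ℕ // x ≤ k}, f k = ∑' j : ℕ, f (j + ⌈x⌉₊) := by
  let e : ℕ ≃ {k : ℕ // x ≤ k} :=
    { toFun := fun j => ⟨j + ⌈x⌉₊, (Nat.le_ceil x).trans (by simp)⟩
      invFun := fun k => k.1 - ⌈x⌉₊
      left_inv := fun j => by simp
      right_inv := fun k => Subtype.ext (Nat.sub_add_cancel (Nat.ceil_le.mpr k.2)) }
  exact (e.tsum_eq (fun k => f k)).symm

section TailBounds

variable {σ : ℝ}

theorem integral_Ioi_rpow_neg (hσ : 1 < σ) {a : ℝ} (ha : 0 < a) :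
    ∫ t in Ioi a, t ^ (-σ) = a ^ (1 - σ) / (σ - 1) := by
  rw [integral_Ioi_rpow_of_lt (by linarith) ha, neg_add_eq_sub, neg_div, ← div_neg, neg_sub]

theorem antitoneOn_rpow_neg (hσ : 1 < σ) {a : ℝ} (ha : 0 < a) :
    AntitoneOn (fun t : ℝ => t ^ (-σ)) (Ici a) := fun _ hx _ _ hxy =>
  rpow_le_rpow_of_nonpos (ha.trans_le hx) hxy (by linarith)

theorem tsum_nat_add_rpow_neg_bounds (hσ : 1 < σ) {m : ℕ} (hm : 0 < m) :
    (m : ℝ) ^ (1 - σ) / (σ - 1) ≤ ∑' j : ℕ, ((j + m : ℕ) : ℝ) ^ (-σ) ∧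
      ∑' j : ℕ, ((j + m : ℕ) : ℝ) ^ (-σ) ≤ (m : ℝ) ^ (-σ) + (m : ℝ) ^ (1 - σ) / (σ - 1) := by
  have hm' : (0 : ℝ) < m := Nat.cast_pos.mpr hm
  have anti := antitoneOn_rpow_neg hσ hm'
  have nonneg : ∀ t ∈ Ioi (m : ℝ), 0 ≤ t ^ (-σ) := fun t ht => rpow_nonneg (hm'.trans ht).le _
  have summable : Summable fun n : ℕ => (n : ℝ) ^ (-σ) := summable_nat_rpow.mpr (by linarith)
  rw [← integral_Ioi_rpow_neg hσ hm']
  refine ⟨anti.integral_le_tsum_comp_add m summable nonneg, ?_⟩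
  have tail := anti.tsum_comp_add_le_integral m
    (integrableOn_Ioi_rpow_of_lt (by linarith) hm') nonneg
  rw [((summable_nat_add_iff m).mpr summable).tsum_eq_zero_add]
  simpa [add_right_comm] using tail

theorem rpow_mul_tsum_rpow_neg_tail_bounds (hσ : 1 < σ) {x : ℝ} (hx : 1 ≤ x) :
    (1 + x⁻¹) ^ (1 - σ) / (σ - 1) ≤ x ^ (σ - 1) * ∑' k : {k : ℕ // x ≤ k}, (k : ℝ) ^ (-σ) ∧
      x ^ (σ - 1) * ∑' k : {k : ℕ // x ≤ k}, (k : ℝ) ^ (-σ) ≤ x⁻¹ + 1 / (σ - 1) := by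
  have hx0 : 0 < x := by linarith
  have hxm : x ≤ ⌈x⌉₊ := Nat.le_ceil x
  have hmx : (⌈x⌉₊ : ℝ) < x + 1 := Nat.ceil_lt_add_one hx0.le
  obtain ⟨hlow, hup⟩ := tsum_nat_add_rpow_neg_bounds hσ (Nat.ceil_pos.mpr hx0)
  rw [tsum_subtype_le_natCast (fun k : ℕ => (k : ℝ) ^ (-σ))]
  have hσ1 : 0 < σ - 1 := by linarith
  have hxσ : 0 < x ^ (σ - 1) := rpow_pos_of_pos hx0 _
  constructor
  · calc (1 + x⁻¹) ^ (1 - σ) / (σ - 1) = x ^ (σ - 1) * ((x + 1) ^ (1 - σ) / (σ - 1)) := by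
          have hinv : x ^ (σ - 1) = (x ^ (1 - σ))⁻¹ := by
            rw [← rpow_neg hx0.le, neg_sub]
          rw [hinv, show 1 + x⁻¹ = (x + 1) / x by field_simp, div_rpow (by positivity) hx0.le]
          ring
      _ ≤ x ^ (σ - 1) * ((⌈x⌉₊ : ℝ) ^ (1 - σ) / (σ - 1)) := by
          gcongr ?_ * (?_ / _)
          exact rpow_le_rpow_of_nonpos (by positivity) hmx.le (by linarith)
      _ ≤ _ := by gcongr
  · calc _ ≤ x ^ (σ - 1) * (x ^ (-σ) + x ^ (1 - σ) / (σ - 1)) := by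
          refine mul_le_mul_of_nonneg_left (hup.trans ?_) hxσ.le
          exact add_le_add (rpow_le_rpow_of_nonpos hx0 hxm (by linarith))
            (div_le_div_of_nonneg_right (rpow_le_rpow_of_nonpos hx0 hxm (by linarith)) hσ1.le)
      _ = x⁻¹ + 1 / (σ - 1) := by
          rw [mul_add, ← rpow_add hx0, ← mul_div_assoc, ← rpow_add hx0]
          rw [show σ - 1 + -σ = -1 by ring, show σ - 1 + (1 - σ) = 0 by ring, rpow_neg_one,
            rpow_zero]

theorem tendsto_rpow_mul_tsum_rpow_neg_tail (hσ : 1 < σ) :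
    Tendsto (fun x : ℝ => x ^ (σ - 1) * ∑' k : {k : ℕ // x ≤ k}, (k : ℝ) ^ (-σ)) atTop
      (𝓝 (1 / (σ - 1))) := by
  have lower : Tendsto (fun x : ℝ => (1 + x⁻¹) ^ (1 - σ) / (σ - 1)) atTop (𝓝 (1 / (σ - 1))) := by
    simpa using ((tendsto_inv_atTop_zero.const_add 1).rpow_const
      (p := 1 - σ) (Or.inl (by norm_num))).div_const (σ - 1)
  have upper : Tendsto (fun x : ℝ => x⁻¹ + 1 / (σ - 1)) atTop (𝓝 (1 / (σ - 1))) := by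
    simpa using tendsto_inv_atTop_zero.add_const (1 / (σ - 1))
  have bounds := eventually_atTop.mpr ⟨1, fun x hx => rpow_mul_tsum_rpow_neg_tail_bounds hσ hx⟩
  exact tendsto_of_tendsto_of_tendsto_of_le_of_le' lower upper (bounds.mono fun _ h => h.1)
    (bounds.mono fun _ h => h.2)

end TailBounds

theorem tendsto_rpow_mul_tsum_rpow_mul_sub_tail {s : ℝ} (hs : 1 < s) (b : ℝ) :
    Tendsto (fun x : ℝ => x ^ (s - 1) *
        ∑' k : {k : ℕ // x ≤ k}, (k : ℝ) ^ (-1 - s) * (k - b * x)) atTop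
      (𝓝 (1 / (s - 1) - b / s)) := by
  have summable (σ : ℝ) (hσ : 1 < σ) (x : ℝ) :
      Summable fun k : {k : ℕ // x ≤ k} => (k : ℝ) ^ (-σ) :=
    (summable_nat_rpow.mpr (by linarith)).subtype _
  have key := (tendsto_rpow_mul_tsum_rpow_neg_tail hs).sub
    ((tendsto_rpow_mul_tsum_rpow_neg_tail (σ := s + 1) (by linarith)).const_mul b)
  rw [add_sub_cancel_right, mul_one_div] at key
  refine key.congr' (eventually_atTop.mpr ⟨1, fun x hx => ?_⟩)
  have hx0 : 0 < x := by linarith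
  have term (k : {k : ℕ // x ≤ k}) :
      (k : ℝ) ^ (-1 - s) * (k - b * x) = (k : ℝ) ^ (-s) - b * x * (k : ℝ) ^ (-(s + 1)) := by
    have hk : (k : ℝ) ≠ 0 := (hx0.trans_le k.2).ne'
    rw [show -1 - s = -s - 1 by ring, rpow_sub_one hk, neg_add', rpow_sub_one hk]
    field_simp
  have hxs : x ^ s = x ^ (s - 1) * x := by rw [← rpow_add_one hx0.ne', sub_add_cancel]
  dsimp only
  rw [tsum_congr term, (summable s hs x).tsum_sub ((summable _ (by linarith) x).mul_left _),
    tsum_mul_left, hxs]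
  ring

theorem spa_E1_tsum_eq {p A1 c α n : ℝ} (s : ℝ) (hA1 : 0 < A1) (hn : 0 < n) :
    ∑' k : {k : ℕ // n ^ (1 - α) / A1 ≤ (k : ℝ)},
        c * ((k : ℕ) : ℝ) ^ (-1 - s) * n * (((k : ℕ) : ℝ) - p * n ^ (1 - α)) =
      c * n * (n ^ (1 - α) / A1) ^ (1 - s) * ((n ^ (1 - α) / A1) ^ (s - 1) *
        ∑' k : {k : ℕ // n ^ (1 - α) / A1 ≤ (k : ℝ)},
          ((k : ℕ) : ℝ) ^ (-1 - s) * (k - p * A1 * (n ^ (1 - α) / A1))) := by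
  have hK : 0 < n ^ (1 - α) / A1 := by positivity
  rw [← mul_assoc, mul_assoc _ (_ ^ (1 - s)), ← rpow_add hK, sub_add_sub_cancel', sub_self,
    rpow_zero, mul_one, ← tsum_mul_left]
  congr! 2 with k
  field_simp

theorem spa_E1_main_term_eq {p A1 c α n : ℝ} (hp : 0 < p) (hA1 : 0 < A1) (hpA1 : p * A1 < 1)
    (hn : 0 < n) :
    c * (p * A1 ^ (1 / (p * A1)) / (1 - p * A1))
        * n ^ (2 - 1 / (p * A1) + α * (1 - p * A1) / (p * A1))
        * (1 - (p * A1) * (1 - p * A1)) =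
      c * n * (n ^ (1 - α) / A1) ^ (1 - 1 / (p * A1)) *
        (1 / (1 / (p * A1) - 1) - p * A1 / (1 / (p * A1))) := by
  set s := 1 / (p * A1) with hs
  have hb : p * A1 ≠ 0 := by positivity
  have hb1 : 1 - p * A1 ≠ 0 := by linarith
  have hexp : 2 - s + α * (1 - p * A1) / (p * A1) = 1 + (1 - α) * (1 - s) := by
    rw [hs]; field_simp; ring
  have hA1s : A1 ^ s = A1 * (A1 ^ (1 - s))⁻¹ := by
    rw [← rpow_neg hA1.le, mul_comm, ← rpow_add_one hA1.ne', neg_sub, sub_add_cancel]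
  rw [hexp, rpow_add hn, rpow_one, rpow_mul hn.le, div_rpow (by positivity) hA1.le, hA1s, hs]
  field_simp

theorem spa_E1_sum_asymptotics_general (p A1 c α : ℝ) (hp0 : 0 < p)
    (hA1 : 0 < A1) (hpA1 : p * A1 < 1) (hc : 0 < c) (hα1 : α < 1)
    (ε : ℝ) (hε : 0 < ε) :
    ∃ n0 : ℕ, ∀ n : ℕ, n0 ≤ n →
      |(∑' k : {k : ℕ // (n : ℝ) ^ (1 - α) / A1 ≤ (k : ℝ)},
            c * ((k : ℕ) : ℝ) ^ (-1 - 1 / (p * A1)) * (n : ℝ)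
              * (((k : ℕ) : ℝ) - p * (n : ℝ) ^ (1 - α)))
          - c * (p * A1 ^ (1 / (p * A1)) / (1 - p * A1))
              * (n : ℝ) ^ (2 - 1 / (p * A1) + α * (1 - p * A1) / (p * A1))
              * (1 - (p * A1) * (1 - p * A1))|
        ≤ ε * (c * (p * A1 ^ (1 / (p * A1)) / (1 - p * A1))
              * (n : ℝ) ^ (2 - 1 / (p * A1) + α * (1 - p * A1) / (p * A1))
              * (1 - (p * A1) * (1 - p * A1))) := by
  have hb : 0 < p * A1 := mul_pos hp0 hA1
  have hs : 1 < 1 / (p * A1) := one_lt_one_div hb hpA1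
  set D := 1 / (1 / (p * A1) - 1) - p * A1 / (1 / (p * A1))
  have hD : 0 < D := by
    simp only [D]
    field_simp
    exact mul_pos hb (sub_pos.mpr (hpA1.trans (one_lt_one_div (by linarith) (by linarith))))
  have hK : Tendsto (fun n : ℕ => (n : ℝ) ^ (1 - α) / A1) atTop atTop :=
    ((tendsto_rpow_atTop (by linarith)).comp tendsto_natCast_atTop_atTop).atTop_div_const hA1
  have hlim := (tendsto_rpow_mul_tsum_rpow_mul_sub_tail hs (p * A1)).comp hK
  obtain ⟨n0, hn0⟩ := eventually_atTop.mp <|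
    (hlim.eventually (Metric.closedBall_mem_nhds D (mul_pos hε hD))).and (eventually_gt_atTop 0)
  refine ⟨n0, fun n hn => ?_⟩
  obtain ⟨hclose, hnpos⟩ := hn0 n hn
  have hn' : (0 : ℝ) < n := Nat.cast_pos.mpr hnpos
  rw [spa_E1_tsum_eq _ hA1 hn', spa_E1_main_term_eq hp0 hA1 hpA1 hn', ← mul_sub, abs_mul,
    abs_of_pos (by positivity), mul_left_comm]
  exact mul_le_mul_of_nonneg_left (Metric.mem_closedBall.mp hclose) (by positivity)

/-- For p ∈ (0,1], A₁ > 0 with pA₁ < 1, c > 0 and α ∈ (0,1), with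
k_max(n) = n^{1−α}/A₁, as n → ∞:
∑_{k ≥ k_max(n)} c·k^{−1−1/(pA₁)}·n·(k − p·n^{1−α})
= (1+o(1))·c·(p·A₁^{1/(pA₁)}/(1−pA₁))·n^{2−1/(pA₁)+α(1−pA₁)/(pA₁)}·(1 − pA₁(1−pA₁)). -/
theorem spa_E1_sum_asymptotics (p A1 c α : ℝ) (hp0 : 0 < p) (hp1 : p ≤ 1)
    (hA1 : 0 < A1) (hpA1 : p * A1 < 1) (hc : 0 < c) (hα0 : 0 < α) (hα1 : α < 1)
    (ε : ℝ) (hε : 0 < ε) :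
    ∃ n0 : ℕ, ∀ n : ℕ, n0 ≤ n →
      |(∑' k : {k : ℕ // (n : ℝ) ^ (1 - α) / A1 ≤ (k : ℝ)},
            c * ((k : ℕ) : ℝ) ^ (-1 - 1 / (p * A1)) * (n : ℝ)
              * (((k : ℕ) : ℝ) - p * (n : ℝ) ^ (1 - α)))
          - c * (p * A1 ^ (1 / (p * A1)) / (1 - p * A1))
              * (n : ℝ) ^ (2 - 1 / (p * A1) + α * (1 - p * A1) / (p * A1))
              * (1 - (p * A1) * (1 - p * A1))|
        ≤ ε * (c * (p * A1 ^ (1 / (p * A1)) / (1 - p * A1))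
              * (n : ℝ) ^ (2 - 1 / (p * A1) + α * (1 - p * A1) / (p * A1))
              * (1 - (p * A1) * (1 - p * A1))) :=
  spa_E1_sum_asymptotics_general p A1 c α hp0 hA1 hpA1 hc hα1 ε hε
end
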